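/- arXiv:2102.06426 — 3 statements merged into one kernel-verified Lean document; each statement's English description precedes it below -/
import Mathlib

section
/- Let I be a squarefree stable ideal of S = K[x_1,…,x_n]. If β_{k,k+ℓ}(I) is an extremal Betti number of I, then 1 ≤ β_{k,k+ℓ}(I) ≤ C(k+ℓ−1, ℓ−1), where C(·,·) denotes the binomial coefficient. -/
/-!
Under `β_{k+1,k+1+ℓ}(I) = 0`, which extremality forces, every degree-`ℓ` generator `u` has
`m(u) ≤ k + ℓ`, so the Aramova–Herzog–Hibi sum for `β_{k,k+ℓ}(I)` just counts the generators
with `m(u) = k + ℓ`. These lie in `A^s(k,ℓ)`, and `u ↦ u / x_{k+ℓ}` embeds `A^s(k,ℓ)` into the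
`(ℓ-1)`-subsets of `{1,…,k+ℓ-1}`.
-/

open Finset

noncomputable section

/-- `m(u)`: the maximal index in the support of a squarefree monomial `u`,
where a squarefree monomial of `K[x_1,…,x_n]` is identified with its support,
a finite set of variable indices (`m(1) = 0`). -/
def mmax (u : Finset ℕ) : ℕ := u.sup id

/-- A squarefree monomial ideal of `K[x_1,…,x_n]`, identified with the (finite) set of
squarefree monomials belonging to it: it is upward closed under divisibility of
squarefree monomials, i.e. under taking supersets inside `{1,…,n}`. -/
def IsSqIdeal (n : ℕ) (I : Finset (Finset ℕ)) : Prop :=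
  (∀ u ∈ I, u ⊆ Finset.Icc 1 n) ∧
    ∀ u ∈ I, ∀ v, u ⊆ v → v ⊆ Finset.Icc 1 n → v ∈ I

/-- `G(I)`: the minimal monomial generators of a squarefree monomial ideal. -/
def gens (I : Finset (Finset ℕ)) : Finset (Finset ℕ) :=
  I.filter fun u => ∀ v ∈ I, v ⊆ u → v = u

/-- `G(I)_ℓ`: the degree-`ℓ` minimal generators. -/
def gensDeg (I : Finset (Finset ℕ)) (l : ℕ) : Finset (Finset ℕ) :=
  (gens I).filter fun u => u.card = l

/-- The graded Betti number `β_{k,k+ℓ}(I)` of a squarefree stable ideal, given by the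
Aramova–Herzog–Hibi formula (taken as the definition). -/
def betti (I : Finset (Finset ℕ)) (k l : ℕ) : ℕ :=
  ∑ u ∈ gensDeg I l, (mmax u - l).choose k

/-- `β_{k,k+ℓ}(I)` is an extremal Betti number. -/
def IsExtremal (I : Finset (Finset ℕ)) (k l : ℕ) : Prop :=
  betti I k l ≠ 0 ∧ ∀ i j, k ≤ i → l ≤ j → (i, j) ≠ (k, l) → betti I i j = 0

/-- `C(I)`: the set of corners of `I`. -/
def corners (I : Finset (Finset ℕ)) : Set (ℕ × ℕ) :=
  {p | IsExtremal I p.1 p.2}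

/-- squarefree stable ideal. -/
def IsSqStable (n : ℕ) (I : Finset (Finset ℕ)) : Prop :=
  IsSqIdeal n I ∧
    ∀ u ∈ gens I, ∀ j, 1 ≤ j → j < mmax u → j ∉ u →
      insert j (u.erase (mmax u)) ∈ I

/-- squarefree strongly stable ideal. -/
def IsSqStronglyStable (n : ℕ) (I : Finset (Finset ℕ)) : Prop :=
  IsSqIdeal n I ∧
    ∀ u ∈ gens I, ∀ i ∈ u, ∀ j, 1 ≤ j → j < i → j ∉ u →
      insert j (u.erase i) ∈ I

/-- `u >_slex v` for squarefree monomials of the same degree: at the first position where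
the increasing index sequences differ, `u` has the smaller index; equivalently the least
element of the symmetric difference belongs to `u`. -/
def slexGT (u v : Finset ℕ) : Prop :=
  u ≠ v ∧ sInf {a : ℕ | a ∈ symmDiff u v} ∈ u

/-- `u ≥_slex v`. -/
def slexGE (u v : Finset ℕ) : Prop := u = v ∨ slexGT u v

/-- `A^s(k,ℓ)`: the squarefree monomials of `K[x_1,…,x_n]` of degree `ℓ` with `m(u) = k+ℓ`. -/
def Asf (n k l : ℕ) : Finset (Finset ℕ) :=
  (Finset.Icc 1 n).powerset.filter fun u => u.card = l ∧ mmax u = k + l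

/-- The set of gaps of a squarefree monomial `u`, recorded by the element of `u`
immediately preceding each gap. -/
def gapSet (u : Finset ℕ) : Finset ℕ :=
  u.filter fun a => a < mmax u ∧ a + 1 ∉ u

/-- The width of the gap of `u` starting right after `a`. -/
def gapWidth (u : Finset ℕ) (a : ℕ) : ℕ :=
  sInf {b : ℕ | b ∈ u ∧ a < b} - a - 1

/-- The squarefree shadow of a set `T` of squarefree monomials:
`Shad(T) = {x_i u : u ∈ T, i ∉ supp u, i = 1,…,n}`. -/
def shadS (n : ℕ) (T : Set (Finset ℕ)) : Set (Finset ℕ) :=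
  {v | ∃ u ∈ T, ∃ i, i ∈ Finset.Icc 1 n ∧ i ∉ u ∧ v = insert i u}

/-- A squarefree strongly stable set of squarefree monomials. -/
def IsSSSetS (T : Set (Finset ℕ)) : Prop :=
  ∀ u ∈ T, ∀ i ∈ u, ∀ j, 1 ≤ j → j < i → j ∉ u → insert j (u.erase i) ∈ T

/-- Membership in `B(u_1,…,u_r)`, the smallest squarefree strongly stable set
containing the monomials of `U`. -/
inductive BMem (U : Finset (Finset ℕ)) : Finset ℕ → Prop
  | base : ∀ u ∈ U, BMem U u
  | step : ∀ u, BMem U u → ∀ i ∈ u, ∀ j, 1 ≤ j → j < i → j ∉ u →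
      BMem U (insert j (u.erase i))

/-- `BShad(u_1,…,u_r)_{(k₂,ℓ₂)}` for monomials `u_1,…,u_r` of degree `ℓ₁`:
the elements of `Shad^{ℓ₂-ℓ₁}(B(u_1,…,u_r))` with `m(v) ≤ k₂+ℓ₂`. -/
def bshad (n l1 k2 l2 : ℕ) (U : Finset (Finset ℕ)) : Set (Finset ℕ) :=
  {v | v ∈ (shadS n)^[l2 - l1] {u | BMem U u} ∧ mmax v ≤ k2 + l2}

/-- squarefree lexsegment ideal. -/
def IsSqLex (n : ℕ) (I : Finset (Finset ℕ)) : Prop :=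
  IsSqIdeal n I ∧
    ∀ u ∈ I, ∀ v, v ⊆ Finset.Icc 1 n → v.card = u.card → slexGT v u → v ∈ I

lemma le_mmax {u : Finset ℕ} {a : ℕ} (ha : a ∈ u) : a ≤ mmax u :=
  le_sup (f := id) ha

lemma mmax_mem {u : Finset ℕ} (hu : u.Nonempty) : mmax u ∈ u := by
  obtain ⟨b, hb, hbeq⟩ := exists_mem_eq_sup u hu id
  rwa [mmax, hbeq]

lemma card_le_mmax {u : Finset ℕ} (hu : 0 ∉ u) : u.card ≤ mmax u := by
  have hsub : u ⊆ Icc 1 (mmax u) := fun a ha =>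
    mem_Icc.mpr ⟨Nat.one_le_iff_ne_zero.mpr (ne_of_mem_of_not_mem ha hu), le_mmax ha⟩
  simpa using card_le_card hsub

lemma card_Asf_le (n k l : ℕ) : (Asf n k l).card ≤ (k + l - 1).choose (l - 1) := by
  rcases Nat.eq_zero_or_pos l with rfl | hl
  · have hsub : Asf n k 0 ⊆ {∅} := fun u hu => by simp_all [Asf]
    simpa using card_le_card hsub
  have hsub : Asf n k l ⊆ ((Icc 1 (k + l - 1)).powersetCard (l - 1)).image (insert (k + l)) := by
    intro u hu
    obtain ⟨hIcc, hcard, hmax⟩ := by simpa only [Asf, mem_filter, mem_powerset] using hu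
    have hmem : k + l ∈ u := hmax ▸ mmax_mem (card_pos.mp (hcard ▸ hl))
    refine mem_image.mpr ⟨u.erase (k + l), mem_powersetCard.mpr ⟨fun a ha => ?_, ?_⟩,
      insert_erase hmem⟩
    · obtain ⟨hne, hau⟩ := mem_erase.mp ha
      have hle := le_mmax hau
      have hpos := (mem_Icc.mp (hIcc hau)).1
      exact mem_Icc.mpr ⟨by omega, by omega⟩
    · rw [card_erase_of_mem hmem, hcard]
  calc (Asf n k l).card ≤ _ := card_le_card hsub
    _ ≤ _ := card_image_le
    _ = (k + l - 1).choose (l - 1) := by simp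

section

variable {n : ℕ} {I : Finset (Finset ℕ)}

lemma IsSqIdeal.subset_Icc_of_mem_gensDeg (hI : IsSqIdeal n I) {l : ℕ} {u : Finset ℕ}
    (hu : u ∈ gensDeg I l) : u ⊆ Icc 1 n :=
  hI.1 u (mem_filter.mp (mem_filter.mp hu).1).1

lemma IsSqIdeal.filter_gensDeg_subset_Asf (hI : IsSqIdeal n I) (k l : ℕ) :
    (gensDeg I l).filter (fun u => mmax u = k + l) ⊆ Asf n k l := by
  intro u hu
  obtain ⟨hgen, hmax⟩ := mem_filter.mp hu
  simp only [Asf, mem_filter, mem_powerset]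
  exact ⟨hI.subset_Icc_of_mem_gensDeg hgen, (mem_filter.mp hgen).2, hmax⟩

/-- Once `β_{k+1,k+1+ℓ}(I)` vanishes, every summand of `β_{k,k+ℓ}(I)` is `C(m, k)` with
`m ≤ k`, hence `0` or `1`. -/
lemma IsSqIdeal.betti_eq_card_filter_mmax_eq (hI : IsSqIdeal n I) {k l : ℕ}
    (hsucc : betti I (k + 1) l = 0) :
    betti I k l = ((gensDeg I l).filter (fun u => mmax u = k + l)).card := by
  rw [card_filter, betti]
  refine sum_congr rfl fun u hu => ?_
  have hlt : mmax u - l < k + 1 :=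
    Nat.choose_eq_zero_iff.mp ((sum_eq_zero_iff.mp hsucc) u hu)
  have hle : l ≤ mmax u := by
    have h0 : 0 ∉ u := fun h => by simpa using hI.subset_Icc_of_mem_gensDeg hu h
    simpa [(mem_filter.mp hu).2] using card_le_mmax h0
  by_cases hmax : mmax u = k + l
  · simp [hmax]
  · rw [if_neg hmax, Nat.choose_eq_zero_of_lt (by omega)]

end

/-- if `β_{k,k+ℓ}(I)` is an extremal Betti number of a squarefree stable
ideal `I`, then `1 ≤ β_{k,k+ℓ}(I) ≤ C(k+ℓ-1, ℓ-1)`. -/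
theorem betti_bounds_of_extremal (n k l : ℕ) (I : Finset (Finset ℕ))
    (hI : IsSqStable n I) (h : IsExtremal I k l) :
    1 ≤ betti I k l ∧ betti I k l ≤ (k + l - 1).choose (l - 1) := by
  obtain ⟨hne, hvanish⟩ := h
  refine ⟨Nat.one_le_iff_ne_zero.mpr hne, ?_⟩
  have hsucc : betti I (k + 1) l = 0 := hvanish (k + 1) l (Nat.le_succ k) le_rfl (by simp)
  rw [hI.1.betti_eq_card_filter_mmax_eq hsucc]
  exact (card_le_card (hI.1.filter_gensDeg_subset_Asf k l)).trans (card_Asf_le n k l)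
end
end

section
/- Let n ≥ 2 and let I be a squarefree strongly stable ideal of S = K[x_1,…,x_n] such that (k,1) is a corner of I for some positive integer k (so k+1 ≤ n). Then (k,1) is the only corner of I, i.e. C(I) = {(k,1)}, and I = (x_1, x_2, …, x_{k+1}). -/
open Finset

noncomputable section

/-!
A corner `(k,1)` forces a generator `x_{k+1}` and no degree-one generator beyond `x_{k+1}`;
stability then puts `x_1,…,x_{k+1}` in `I`. A generator `u` of degree `ℓ ≥ 2` would need
`m(u) - ℓ < k` because `β_{k,k+ℓ}(I) = 0`, so `min(u) ≤ k` and `x_{min(u)}` would properly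
divide it. Hence `G(I) = {x_1,…,x_{k+1}}`, whose only nonzero Betti numbers are
`β_{i,i+1}` with `i ≤ k`.
-/

lemma mmax_singleton (a : ℕ) : mmax {a} = a := by
  simp [mmax]

lemma exists_mem_add_card_le_mmax {u : Finset ℕ} (hu : u.Nonempty) :
    ∃ b ∈ u, b + u.card ≤ mmax u + 1 := by
  refine ⟨u.min' hu, u.min'_mem hu, ?_⟩
  have hsub : u ⊆ Finset.Icc (u.min' hu) (mmax u) := fun x hx =>
    Finset.mem_Icc.mpr ⟨u.min'_le x hx, le_mmax hx⟩
  have hcard := Finset.card_le_card hsub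
  rw [Nat.card_Icc] at hcard
  have := le_mmax (u.min'_mem hu)
  omega

section Generators

variable {I : Finset (Finset ℕ)}

lemma mem_of_mem_gens {u : Finset ℕ} (hu : u ∈ gens I) : u ∈ I :=
  (Finset.mem_filter.mp hu).1

lemma eq_of_mem_gens_of_subset {u v : Finset ℕ} (hu : u ∈ gens I) (hv : v ∈ I) (hvu : v ⊆ u) :
    v = u :=
  (Finset.mem_filter.mp hu).2 v hv hvu

lemma exists_mem_gens_subset {v : Finset ℕ} (hv : v ∈ I) : ∃ u ∈ gens I, u ⊆ v := by
  obtain ⟨w, hw, hmin⟩ := Finset.exists_min_image (I.filter (· ⊆ v)) Finset.card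
    ⟨v, Finset.mem_filter.mpr ⟨hv, subset_rfl⟩⟩
  rw [Finset.mem_filter] at hw
  refine ⟨w, Finset.mem_filter.mpr ⟨hw.1, fun u hu huw => ?_⟩, hw.2⟩
  exact Finset.eq_of_subset_of_card_le huw (hmin u (Finset.mem_filter.mpr ⟨hu, huw.trans hw.2⟩))

lemma IsSqIdeal.mem_iff {n : ℕ} (hI : IsSqIdeal n I) {v : Finset ℕ} :
    v ∈ I ↔ v ⊆ Finset.Icc 1 n ∧ ∃ u ∈ gens I, u ⊆ v := by
  refine ⟨fun hv => ⟨hI.1 v hv, exists_mem_gens_subset hv⟩, ?_⟩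
  rintro ⟨hvn, u, hu, huv⟩
  exact hI.2 u (mem_of_mem_gens hu) v huv hvn

lemma IsSqStronglyStable.isSqStable {n : ℕ} (hI : IsSqStronglyStable n I) : IsSqStable n I := by
  refine ⟨hI.1, fun u hu j hj hjm hju => hI.2 u hu (mmax u) ?_ j hj hjm hju⟩
  have hne : u.Nonempty := by
    by_contra h
    simp [Finset.not_nonempty_iff_eq_empty.mp h, mmax] at hjm
  exact mmax_mem hne

lemma IsSqStable.singleton_mem {n a j : ℕ} (hI : IsSqStable n I) (ha : {a} ∈ gens I)
    (hj : 1 ≤ j) (hja : j ≤ a) : {j} ∈ I := by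
  rcases hja.eq_or_lt with rfl | hlt
  · exact mem_of_mem_gens ha
  · have := hI.2 {a} ha j hj (by rwa [mmax_singleton]) (by simp; omega)
    simpa [mmax_singleton] using this

end Generators

section Betti

variable {I : Finset (Finset ℕ)} {k l : ℕ}

lemma betti_eq_zero_iff : betti I k l = 0 ↔ ∀ u ∈ gensDeg I l, mmax u - l < k := by
  simp only [betti, Finset.sum_eq_zero_iff, Nat.choose_eq_zero_iff]

lemma betti_ne_zero_iff : betti I k l ≠ 0 ↔ ∃ u ∈ gensDeg I l, k ≤ mmax u - l := by
  simp [betti_eq_zero_iff]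

lemma mem_gensDeg_card {u : Finset ℕ} (hu : u ∈ gens I) : u ∈ gensDeg I u.card :=
  Finset.mem_filter.mpr ⟨hu, rfl⟩

lemma IsExtremal.betti_eq_zero {i j : ℕ} (hE : IsExtremal I k l) (hi : k ≤ i) (hj : l ≤ j)
    (hne : i ≠ k ∨ j ≠ l) : betti I i j = 0 :=
  hE.2 i j hi hj (by simpa [Prod.ext_iff, or_iff_not_imp_left] using hne)

lemma IsExtremal.eq_of_le {i j : ℕ} (hE : IsExtremal I k l) (hE' : IsExtremal I i j)
    (hi : i ≤ k) (hj : j ≤ l) : i = k ∧ j = l := by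
  by_contra h
  exact hE.1 (hE'.betti_eq_zero hi hj (by omega))

end Betti

section CornerDegOne

variable {n k : ℕ} {I : Finset (Finset ℕ)}

lemma IsExtremal.mmax_le_of_mem_gensDeg_one (hE : IsExtremal I k 1) {u : Finset ℕ}
    (hu : u ∈ gensDeg I 1) : mmax u ≤ k + 1 := by
  have := betti_eq_zero_iff.mp (hE.betti_eq_zero (Nat.le_succ k) le_rfl (by omega)) u hu
  omega

lemma IsExtremal.mmax_sub_card_lt (hE : IsExtremal I k 1) {u : Finset ℕ} (hu : u ∈ gens I)
    (hcard : 2 ≤ u.card) : mmax u - u.card < k :=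
  betti_eq_zero_iff.mp (hE.betti_eq_zero le_rfl (by omega) (by omega)) u (mem_gensDeg_card hu)

lemma IsExtremal.singleton_mem_gens (hI : IsSqIdeal n I) (hE : IsExtremal I k 1) :
    {k + 1} ∈ gens I := by
  obtain ⟨u, hu, hku⟩ := betti_ne_zero_iff.mp hE.1
  obtain ⟨a, rfl⟩ := Finset.card_eq_one.mp (Finset.mem_filter.mp hu).2
  have hmax := hE.mmax_le_of_mem_gensDeg_one hu
  have ha : 1 ≤ a := (Finset.mem_Icc.mp (hI.1 _ (mem_of_mem_gens (Finset.mem_filter.mp hu).1)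
    (Finset.mem_singleton_self a))).1
  rw [mmax_singleton] at hku hmax
  rw [show k + 1 = a by omega]
  exact (Finset.mem_filter.mp hu).1

lemma IsSqStable.eq_singleton_of_mem_gens (hI : IsSqStable n I) (hE : IsExtremal I k 1)
    {u : Finset ℕ} (hu : u ∈ gens I) : ∃ b, u = {b} ∧ 1 ≤ b ∧ b ≤ k + 1 := by
  have hgen := hE.singleton_mem_gens hI.1
  have huI := mem_of_mem_gens hu
  have hu1 : u.card = 1 := by
    by_contra hne
    have hnonempty : u.Nonempty := Finset.nonempty_iff_ne_empty.mpr fun hempty =>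
      Finset.singleton_ne_empty _
        (eq_of_mem_gens_of_subset hgen (hempty ▸ huI) (Finset.empty_subset _)).symm
    obtain ⟨b, hb, hbcard⟩ := exists_mem_add_card_le_mmax hnonempty
    have hlt := hE.mmax_sub_card_lt hu (by have := hnonempty.card_pos; omega)
    have hb1 : 1 ≤ b := (Finset.mem_Icc.mp (hI.1.1 u huI hb)).1
    have hbu := eq_of_mem_gens_of_subset hu (hI.singleton_mem hgen hb1 (by omega))
      (Finset.singleton_subset_iff.mpr hb)
    exact hne (by rw [← hbu, Finset.card_singleton])
  obtain ⟨b, rfl⟩ := Finset.card_eq_one.mp hu1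
  have hb := hE.mmax_le_of_mem_gensDeg_one (Finset.mem_filter.mpr ⟨hu, hu1⟩)
  rw [mmax_singleton] at hb
  exact ⟨b, rfl, (Finset.mem_Icc.mp (hI.1.1 _ huI (Finset.mem_singleton_self b))).1, hb⟩

end CornerDegOne

theorem corner_deg_one_general (n k : ℕ)
    (I : Finset (Finset ℕ)) (hI : IsSqStronglyStable n I)
    (hc : (k, 1) ∈ corners I) :
    corners I = {(k, 1)} ∧
      I = (Finset.Icc 1 n).powerset.filter fun v => ∃ i ∈ v, i ≤ k + 1 := by
  have hE : IsExtremal I k 1 := hc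
  have hS := hI.isSqStable
  refine ⟨Set.eq_singleton_iff_unique_mem.mpr ⟨hc, ?_⟩, ?_⟩
  · rintro ⟨i, j⟩ (hE' : IsExtremal I i j)
    obtain ⟨u, hu, hiu⟩ := betti_ne_zero_iff.mp hE'.1
    obtain ⟨hug, rfl⟩ := Finset.mem_filter.mp hu
    obtain ⟨b, rfl, -, hb⟩ := hS.eq_singleton_of_mem_gens hE hug
    rw [mmax_singleton, Finset.card_singleton] at hiu
    obtain ⟨rfl, -⟩ := hE.eq_of_le hE' (by omega) (by simp)
    simp
  · ext v
    simp only [hS.1.mem_iff, Finset.mem_filter, Finset.mem_powerset, and_congr_right_iff]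
    intro hvn
    constructor
    · rintro ⟨u, hu, huv⟩
      obtain ⟨b, rfl, -, hb⟩ := hS.eq_singleton_of_mem_gens hE hu
      exact ⟨b, huv (Finset.mem_singleton_self b), hb⟩
    · rintro ⟨i, hiv, hik⟩
      obtain ⟨u, hu, hui⟩ := exists_mem_gens_subset
        (hS.singleton_mem (hE.singleton_mem_gens hS.1) (Finset.mem_Icc.mp (hvn hiv)).1 hik)
      exact ⟨u, hu, hui.trans (Finset.singleton_subset_iff.mpr hiv)⟩

/-- if `n ≥ 2` and a squarefree strongly stable ideal `I` of `K[x_1,…,x_n]`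
has a corner `(k,1)`, then `C(I) = {(k,1)}` and `I = (x_1,…,x_{k+1})`. -/
theorem corner_deg_one (n k : ℕ) (hn : 2 ≤ n) (hk : 1 ≤ k)
    (I : Finset (Finset ℕ)) (hI : IsSqStronglyStable n I)
    (hc : (k, 1) ∈ corners I) :
    corners I = {(k, 1)} ∧
      I = (Finset.Icc 1 n).powerset.filter fun v => ∃ i ∈ v, i ≤ k + 1 :=
  corner_deg_one_general n k I hI hc
end
end

section
/- Let n ≥ 5, let ℓ ≥ 3, and let I be a squarefree strongly stable ideal of S = K[x_1,…,x_n] of initial degree ℓ having a corner in degree ℓ (i.e. (k,ℓ) ∈ C(I) for some positive integer k). Then I has at most n−ℓ corners, i.e. |C(I)| ≤ n−ℓ. -/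
open Finset

noncomputable section

lemma mmax_le_of_isSqIdeal {n : ℕ} {I : Finset (Finset ℕ)} (hI : IsSqIdeal n I)
    {u : Finset ℕ} (hu : u ∈ I) : mmax u ≤ n :=
  Finset.sup_le fun _ ha => (mem_Icc.mp (hI.1 u hu ha)).2

lemma exists_mem_gensDeg_of_betti_ne_zero {I : Finset (Finset ℕ)} {k l : ℕ}
    (h : betti I k l ≠ 0) : ∃ u ∈ gensDeg I l, k ≤ mmax u - l := by
  obtain ⟨u, hu, hne⟩ := exists_ne_zero_of_sum_ne_zero h
  exact ⟨u, hu, not_lt.mp fun hlt => hne (Nat.choose_eq_zero_of_lt hlt)⟩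

lemma corners_snd_injOn (I : Finset (Finset ℕ)) : Set.InjOn Prod.snd (corners I) := by
  rintro ⟨i, j⟩ ⟨hp, hpext⟩ ⟨i', j'⟩ ⟨hq, hqext⟩ (rfl : j = j')
  rcases lt_trichotomy i i' with h | rfl | h
  · exact absurd (hpext i' j h.le le_rfl (by simp [h.ne'])) hq
  · rfl
  · exact absurd (hqext i j h.le le_rfl (by simp [h.ne'])) hp

lemma add_le_of_mem_corners {n : ℕ} {I : Finset (Finset ℕ)} (hI : IsSqIdeal n I)
    {p : ℕ × ℕ} (hp : p ∈ corners I) : p.1 + p.2 ≤ n := by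
  obtain ⟨u, hu, hle⟩ := exists_mem_gensDeg_of_betti_ne_zero hp.1
  simp only [gensDeg, gens, mem_filter] at hu
  have hm := mmax_le_of_isSqIdeal hI hu.1.1
  have hcard := card_le_card (hI.1 u hu.1.1)
  rw [Nat.card_Icc, hu.2] at hcard
  omega

lemma le_snd_of_mem_corners {I : Finset (Finset ℕ)} {l : ℕ} (hindeg : ∀ u ∈ I, l ≤ u.card)
    {p : ℕ × ℕ} (hp : p ∈ corners I) : l ≤ p.2 := by
  obtain ⟨u, hu, -⟩ := exists_mem_gensDeg_of_betti_ne_zero hp.1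
  simp only [gensDeg, gens, mem_filter] at hu
  exact hu.2 ▸ hindeg u hu.1.1

lemma exists_lt_notMem_of_ne_Icc {u : Finset ℕ} (hpos : ∀ a ∈ u, 1 ≤ a)
    (hne : u ≠ Icc 1 u.card) : ∃ i ∈ u, ∃ j, 1 ≤ j ∧ j < i ∧ j ∉ u := by
  obtain ⟨j, hjI, hju⟩ : ∃ j ∈ Icc 1 u.card, j ∉ u := not_subset.mp fun hsub =>
    hne (eq_of_subset_of_card_le hsub (by simp)).symm
  obtain ⟨hj1, hjl⟩ := mem_Icc.mp hjI
  by_contra! hno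
  have hsub : u ⊆ Icc 1 (j - 1) := fun a ha =>
    mem_Icc.mpr ⟨hpos a ha, by have := hno a ha j hj1; grind⟩
  have := card_le_card hsub
  simp only [Nat.card_Icc] at this
  omega

lemma Icc_mem_of_isSqStronglyStable {n l : ℕ} {I : Finset (Finset ℕ)}
    (hI : IsSqStronglyStable n I) (hindeg : ∀ u ∈ I, l ≤ u.card)
    {u : Finset ℕ} (hu : u ∈ I) (hcard : u.card = l) : Icc 1 l ∈ I := by
  induction hs : ∑ a ∈ u, a using Nat.strong_induction_on generalizing u with
  | _ s ih =>
    by_cases hEq : u = Icc 1 l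
    · exact hEq ▸ hu
    have hpos : ∀ a ∈ u, 1 ≤ a := fun a ha => (mem_Icc.mp (hI.1.1 u hu ha)).1
    obtain ⟨i, hi, j, hj1, hji, hju⟩ := exists_lt_notMem_of_ne_Icc hpos (hcard ▸ hEq)
    have hgen : u ∈ gens I := mem_filter.mpr ⟨hu, fun v hv hvu =>
      eq_of_subset_of_card_le hvu (hcard ▸ hindeg v hv)⟩
    have hju' : j ∉ u.erase i := fun h => hju (mem_of_mem_erase h)
    have hsum : i + ∑ a ∈ u.erase i, a = s := hs ▸ add_sum_erase u id hi
    refine ih _ ?_ (hI.2 u hgen i hi j hj1 hji hju) ?_ (sum_insert hju')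
    · omega
    · rw [card_insert_of_notMem hju', card_erase_of_mem hi, hcard]
      have : 1 ≤ l := hcard ▸ card_pos.mpr ⟨i, hi⟩
      omega

lemma notMem_corners_zero {n l j : ℕ} {I : Finset (Finset ℕ)} (hI : IsSqIdeal n I)
    (hIcc : Icc 1 l ∈ I) (hlj : l < j) : (0, j) ∉ corners I := by
  rintro ⟨hβ, hext⟩
  obtain ⟨u, hu, -⟩ := exists_mem_gensDeg_of_betti_ne_zero hβ
  have hm : mmax u ≤ j := by
    have := sum_eq_zero_iff.mp (hext 1 j zero_le_one le_rfl (by simp)) u hu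
    rw [Nat.choose_one_right] at this
    omega
  simp only [gensDeg, gens, mem_filter] at hu
  obtain ⟨⟨huI, hmin⟩, hcard⟩ := hu
  have huIcc : u = Icc 1 j := eq_of_subset_of_card_le
    (fun a ha => mem_Icc.mpr ⟨(mem_Icc.mp (hI.1 u huI ha)).1, (le_mmax ha).trans hm⟩)
    (by simp [hcard])
  have := congrArg card (hmin _ hIcc (huIcc ▸ Icc_subset_Icc_right hlj.le))
  simp only [Nat.card_Icc, hcard] at this
  omega

theorem corners_le_of_indeg_general (n l : ℕ)
    (I : Finset (Finset ℕ)) (hI : IsSqStronglyStable n I)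
    (hindeg : ∀ u ∈ I, l ≤ u.card)
    (hcor : ∃ k : ℕ, 1 ≤ k ∧ (k, l) ∈ corners I) :
    (corners I).Finite ∧ (corners I).ncard ≤ n - l := by
  obtain ⟨k, hk, hkl⟩ := hcor
  have hln : k + l ≤ n := add_le_of_mem_corners hI.1 hkl
  obtain ⟨u, hu, -⟩ := exists_mem_gensDeg_of_betti_ne_zero hkl.1
  simp only [gensDeg, gens, mem_filter] at hu
  have hIcc : Icc 1 l ∈ I := Icc_mem_of_isSqStronglyStable hI hindeg hu.1.1 hu.2
  have hmaps : Set.MapsTo Prod.snd (corners I) (Icc l (n - 1) : Set ℕ) := by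
    rintro ⟨i, j⟩ hp
    have hlj : l ≤ j := le_snd_of_mem_corners hindeg hp
    have hij : i + j ≤ n := add_le_of_mem_corners hI.1 hp
    have hi : l < j → i ≠ 0 := fun hlt hi0 => notMem_corners_zero hI.1 hIcc hlt (hi0 ▸ hp)
    simp only [coe_Icc, Set.mem_Icc]
    omega
  have hfin : (Icc l (n - 1) : Set ℕ).Finite := finite_toSet _
  refine ⟨hfin.of_injOn hmaps (corners_snd_injOn I), ?_⟩
  calc (corners I).ncard ≤ (Icc l (n - 1) : Set ℕ).ncard :=
        Set.ncard_le_ncard_of_injOn _ hmaps (corners_snd_injOn I) hfin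
    _ ≤ n - l := by rw [Set.ncard_coe_finset, Nat.card_Icc]; omega

/-- for `n ≥ 5` and `ℓ ≥ 3`, a squarefree strongly stable ideal of
`K[x_1,…,x_n]` of initial degree `ℓ` with a corner in degree `ℓ` has at most `n-ℓ`
corners. -/
theorem corners_le_of_indeg (n l : ℕ) (hn : 5 ≤ n) (hl : 3 ≤ l)
    (I : Finset (Finset ℕ)) (hI : IsSqStronglyStable n I)
    (hindeg : ∀ u ∈ I, l ≤ u.card) (hindeg' : ∃ u ∈ I, u.card = l)
    (hcor : ∃ k : ℕ, 1 ≤ k ∧ (k, l) ∈ corners I) :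
    (corners I).Finite ∧ (corners I).ncard ≤ n - l :=
  corners_le_of_indeg_general n l I hI hindeg hcor
end
end
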